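/- Let d ≥ 5 and n ≥ 1 be integers, and define A_{ℓ_1,ℓ_2} := coeff_d( ((1-t)^{ℓ_1}(1-t^2)^{ℓ_2}/(1-t)^{n+1}) · (1 - ℓ_1·t^{d-1} - ℓ_2·t^{d-2}) ). Define E_{ℓ_1,ℓ_2} as the fourth finite difference: E_{ℓ_1,ℓ_2} = ∑_{j=0}^{4} (-1)^j C(4,j) A_{ℓ_1-j, ℓ_2+j}. Then for all integers ℓ_1 ≥ 4, ℓ_2 ≥ 0 with ℓ_1 + ℓ_2 < n and m := n - ℓ_1, one has E_{ℓ_1,ℓ_2} = coeff_{d-4}( (1/(1-t))^{m+1-ℓ_2} · (1+t)^{ℓ_2} ), and moreover E_{ℓ_1,ℓ_2} ≥ 2. -/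

import Mathlib

open PowerSeries Finset

/-- `A_{ℓ₁,ℓ₂}` from the paper, for fixed `d` and `n`. -/
noncomputable def A (d n ℓ₁ ℓ₂ : ℕ) : ℚ :=
  PowerSeries.coeff (R := ℚ) d
    ((1 - (PowerSeries.X : PowerSeries ℚ)) ^ ℓ₁ *
      (1 - (PowerSeries.X : PowerSeries ℚ) ^ 2) ^ ℓ₂ *
      ((1 - (PowerSeries.X : PowerSeries ℚ))⁻¹) ^ (n + 1) *
      (1 - (ℓ₁ : PowerSeries ℚ) * PowerSeries.X ^ (d - 1) -
        (ℓ₂ : PowerSeries ℚ) * PowerSeries.X ^ (d - 2)))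

noncomputable def E (d n ℓ₁ ℓ₂ : ℕ) : ℚ :=
  ∑ j ∈ Finset.range 5, (-1 : ℚ) ^ j * ((4).choose j : ℚ) * A d n (ℓ₁ - j) (ℓ₂ + j)

/-!
Write `w = (1 - X)⁻¹`. Since `1 - X² = (1 - X)(1 + X)`, the series defining `A_{a,b}` is
`w ^ M * (1 + X) ^ b * (1 - a X^(d-1) - b X^(d-2))` with `M = n + 1 - a - b`, and `M` is the same
for all five terms of `E`. With `u = 1 + X`, the fourth difference of `u ^ j` is `(1 - u)^4 = X^4`,
and that of `j u ^ j` is `-4u(1 - u)^3 = 4(1 + X)X^3`; the latter only meets the correction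
terms, where it is multiplied by `X^(d-1) - X^(d-2)`, so it lives in degrees `> d`. Hence `E` is
the coefficient of `X^(d-4)` in `w ^ M * (1 + X) ^ ℓ₂`. Both factors have nonnegative
coefficients and `(1 + X) ^ ℓ₂` has constant term `1`, so this coefficient is at least the
binomial coefficient `[X^(d-4)] w ^ M ≥ 2`.
-/

namespace PowerSeries

section Field

variable {k : Type*} [Field k]

theorem inv_one_sub_X_eq_mk_one : (1 - X : k⟦X⟧)⁻¹ = mk 1 :=
  (inv_eq_iff_mul_eq_one (by simp)).2 (mk_one_mul_one_sub_eq_one k)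

theorem coeff_inv_one_sub_X_pow_succ (m j : ℕ) :
    coeff j ((1 - X : k⟦X⟧)⁻¹ ^ (m + 1)) = (m + j).choose m := by
  rw [inv_one_sub_X_eq_mk_one, mk_one_pow_eq_mk_choose_add, coeff_mk]

theorem one_sub_X_pow_mul_one_sub_X_sq_pow_mul_inv_pow (a b M : ℕ) :
    (1 - X : k⟦X⟧) ^ a * (1 - X ^ 2) ^ b * (1 - X)⁻¹ ^ (a + b + M) =
      (1 - X)⁻¹ ^ M * (1 + X) ^ b := by
  have hinv : (1 - X : k⟦X⟧) * (1 - X)⁻¹ = 1 := PowerSeries.mul_inv_cancel _ (by simp)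
  generalize (1 - X : k⟦X⟧)⁻¹ = w at hinv ⊢
  calc (1 - X : k⟦X⟧) ^ a * (1 - X ^ 2) ^ b * w ^ (a + b + M)
      = ((1 - X) * w) ^ a * ((1 - X) * w) ^ b * (w ^ M * (1 + X) ^ b) := by
        rw [show (1 - X ^ 2 : k⟦X⟧) = (1 - X) * (1 + X) by ring]
        simp only [mul_pow, pow_add]
        ring
    _ = w ^ M * (1 + X) ^ b := by rw [hinv, one_pow, one_pow, one_mul, one_mul]

end Field

theorem coeff_one_add_X_pow {R : Type*} [CommSemiring R] (b j : ℕ) :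
    coeff j ((1 + X : R⟦X⟧) ^ b) = b.choose j := by
  rw [← Polynomial.coeff_one_add_X_pow, ← Polynomial.coeff_coe]
  simp

theorem coeff_mul_coeff_zero_le_coeff_mul {R : Type*} [CommSemiring R] [PartialOrder R]
    [IsOrderedRing R] {f g : R⟦X⟧} (hf : ∀ i, 0 ≤ coeff i f) (hg : ∀ i, 0 ≤ coeff i g) (n : ℕ) :
    coeff n f * coeff 0 g ≤ coeff n (f * g) := by
  rw [coeff_mul]
  exact single_le_sum (f := fun p => coeff p.1 f * coeff p.2 g)
    (fun p _ => mul_nonneg (hf _) (hg _)) (mem_antidiagonal.2 (add_zero n) : (n, 0) ∈ _)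

theorem two_le_coeff_inv_one_sub_X_pow_mul_one_add_X_pow {k : Type*} [Field k] [LinearOrder k]
    [IsStrictOrderedRing k] {M j : ℕ} (b : ℕ) (hM : 2 ≤ M) (hj : 1 ≤ j) :
    2 ≤ coeff j ((1 - X : k⟦X⟧)⁻¹ ^ M * (1 + X) ^ b) := by
  obtain ⟨m, rfl⟩ : ∃ m, M = m + 1 := ⟨M - 1, by omega⟩
  have hchoose : 2 ≤ (m + j).choose m := calc
    2 ≤ m + 1 := by omega
    _ = (m + 1).choose m := (Nat.choose_succ_self_right m).symm
    _ ≤ (m + j).choose m := Nat.choose_le_choose m (by omega)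
  calc (2 : k) ≤ coeff j ((1 - X : k⟦X⟧)⁻¹ ^ (m + 1)) * coeff 0 ((1 + X : k⟦X⟧) ^ b) := by
        rw [coeff_inv_one_sub_X_pow_succ, coeff_one_add_X_pow, Nat.choose_zero_right,
          Nat.cast_one, mul_one]
        exact_mod_cast hchoose
    _ ≤ _ := coeff_mul_coeff_zero_le_coeff_mul
        (fun i => by rw [coeff_inv_one_sub_X_pow_succ]; positivity)
        (fun i => by rw [coeff_one_add_X_pow]; positivity) j

end PowerSeries

theorem sum_range_five_fourth_difference {R : Type*} [CommRing R] (u x y a b : R) :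
    ∑ j ∈ range 5, (-1) ^ j * ((4).choose j : R) * (u ^ j * (1 - (a - j) * x - (b + j) * y)) =
      (1 - u) ^ 4 * (1 - a * x - b * y) - 4 * u * (1 - u) ^ 3 * (x - y) := by
  simp only [sum_range_succ, sum_range_zero]
  norm_num [Nat.choose]
  ring

theorem A_eq_coeff (d n a b M : ℕ) (h : a + b + M = n + 1) :
    A d n a b = coeff d ((1 - X)⁻¹ ^ M * (1 + X) ^ b *
      (1 - (a : ℚ⟦X⟧) * X ^ (d - 1) - (b : ℚ⟦X⟧) * X ^ (d - 2))) := by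
  rw [A, ← h, one_sub_X_pow_mul_one_sub_X_sq_pow_mul_inv_pow]

theorem E_eq_coeff (d n ℓ₁ ℓ₂ : ℕ) (hd : 4 ≤ d) (hℓ₁ : 4 ≤ ℓ₁) (h : ℓ₁ + ℓ₂ ≤ n) :
    E d n ℓ₁ ℓ₂ = coeff (d - 4) ((1 - X : ℚ⟦X⟧)⁻¹ ^ (n - ℓ₁ + 1 - ℓ₂) * (1 + X) ^ ℓ₂) := by
  set G := (1 - X : ℚ⟦X⟧)⁻¹ ^ (n - ℓ₁ + 1 - ℓ₂) * (1 + X) ^ ℓ₂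
  have hterm : ∀ j ∈ range 5, (-1 : ℚ) ^ j * (4).choose j * A d n (ℓ₁ - j) (ℓ₂ + j) =
      coeff d (G * ((-1) ^ j * ((4).choose j : ℚ⟦X⟧) * ((1 + X) ^ j *
        (1 - ((ℓ₁ : ℚ⟦X⟧) - (j : ℚ⟦X⟧)) * X ^ (d - 1) -
          ((ℓ₂ : ℚ⟦X⟧) + (j : ℚ⟦X⟧)) * X ^ (d - 2))))) := by
    intro j hj
    have hj4 : j ≤ 4 := Nat.lt_succ_iff.1 (mem_range.1 hj)
    rw [A_eq_coeff d n _ _ (n - ℓ₁ + 1 - ℓ₂) (by omega), ← coeff_C_mul]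
    congr 1
    simp only [map_mul, map_pow, map_neg, map_one, map_natCast]
    push_cast [Nat.cast_sub (hj4.trans hℓ₁), pow_add]
    ring
  obtain ⟨e, rfl⟩ : ∃ e, d = e + 4 := ⟨d - 4, by omega⟩
  have hsum : ∑ j ∈ range 5, (-1) ^ j * ((4).choose j : ℚ⟦X⟧) * ((1 + X) ^ j *
        (1 - ((ℓ₁ : ℚ⟦X⟧) - (j : ℚ⟦X⟧)) * X ^ (e + 3) -
          ((ℓ₂ : ℚ⟦X⟧) + (j : ℚ⟦X⟧)) * X ^ (e + 2))) =
      X ^ 4 + X ^ (e + 5) * (4 * (1 + X) * (X - 1) - (ℓ₁ : ℚ⟦X⟧) * X ^ 2 - (ℓ₂ : ℚ⟦X⟧) * X) := by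
    rw [sum_range_five_fourth_difference]
    ring
  rw [E, sum_congr rfl hterm, ← map_sum, ← mul_sum]
  simp only [show e + 4 - 1 = e + 3 by omega, show e + 4 - 2 = e + 2 by omega, hsum]
  simp [mul_add, coeff_X_pow_mul', mul_left_comm G]

theorem stmt9_general (d n ℓ₁ ℓ₂ : ℕ) (hd : 5 ≤ d) (hℓ₁ : 4 ≤ ℓ₁)
    (h : ℓ₁ + ℓ₂ < n) :
    E d n ℓ₁ ℓ₂ =
      PowerSeries.coeff (R := ℚ) (d - 4)
        (((1 - (PowerSeries.X : PowerSeries ℚ))⁻¹) ^ (n - ℓ₁ + 1 - ℓ₂) *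
          (1 + (PowerSeries.X : PowerSeries ℚ)) ^ ℓ₂) ∧
    2 ≤ E d n ℓ₁ ℓ₂ := by
  have hE := E_eq_coeff d n ℓ₁ ℓ₂ (by omega) hℓ₁ h.le
  exact ⟨hE, hE ▸ two_le_coeff_inv_one_sub_X_pow_mul_one_add_X_pow ℓ₂ (by omega) (by omega)⟩

theorem stmt9 (d n ℓ₁ ℓ₂ : ℕ) (hd : 5 ≤ d) (hn : 1 ≤ n) (hℓ₁ : 4 ≤ ℓ₁)
    (h : ℓ₁ + ℓ₂ < n) :
    E d n ℓ₁ ℓ₂ =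
      PowerSeries.coeff (R := ℚ) (d - 4)
        (((1 - (PowerSeries.X : PowerSeries ℚ))⁻¹) ^ (n - ℓ₁ + 1 - ℓ₂) *
          (1 + (PowerSeries.X : PowerSeries ℚ)) ^ ℓ₂) ∧
    2 ≤ E d n ℓ₁ ℓ₂ :=
  stmt9_general d n ℓ₁ ℓ₂ hd hℓ₁ h
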